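/- Theorem 1 (min-max equivalence for the AUC margin loss): the infimum over (a,b) ∈ ℝ² of the supremum over α ∈ [0,∞) of E_μ[F_M(a,b,α)] equals p(1−p)·A_M, and this infimum over (a,b) is attained. -/

import Mathlib

/-!
On `A` the integrand `F_M(a,b,α)` equals `(1-p)(S-a)² - 2α(1-p)S + c` and on `Aᶜ` it equals
`p(S-b)² + 2αpS + c`, with `c = p(1-p)(2αm - α²)`. Conditioning on `A` and `Aᶜ` gives
`E_μ[F_M] = p(1-p)(E₊(S-a)² + E₋(S-b)² + 2α(m + b(S) - a(S)) - α²)`, a concave quadratic in `α`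
whose supremum over `α ≥ 0` is reached at `α = max(m + b(S) - a(S), 0)`. What remains is
minimised over `(a,b)` by the conditional means, because `E(S-t)² = Var S + (E S - t)²`.
-/
open MeasureTheory ProbabilityTheory

/-- The AUC-margin integrand
`F_M(a,b,α) = (1−p)(S−a)²·1_A + p(S−b)²·1_{Aᶜ} − p(1−p)α² + 2α(p(1−p)m + p·S·1_{Aᶜ} − (1−p)·S·1_A)`. -/
noncomputable def FM {Ω : Type*} (A : Set Ω) (p m : ℝ) (S : Ω → ℝ)
    (a b α : ℝ) (ω : Ω) : ℝ :=
  (1 - p) * (S ω - a) ^ 2 * A.indicator 1 ω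
    + p * (S ω - b) ^ 2 * Aᶜ.indicator 1 ω
    - p * (1 - p) * α ^ 2
    + 2 * α * (p * (1 - p) * m + p * S ω * Aᶜ.indicator 1 ω
        - (1 - p) * S ω * A.indicator 1 ω)

section Conditioning

variable {Ω : Type*} [MeasurableSpace Ω] {μ : Measure Ω} {s : Set Ω}

lemma MeasureTheory.MemLp.cond {E : Type*} [NormedAddCommGroup E] {X : Ω → E} {q : ENNReal}
    (hX : MemLp X q μ) : MemLp X q μ[|s] := by
  by_cases hs : μ s = 0
  · simp [cond_eq_zero_of_meas_eq_zero hs]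
  · exact (hX.restrict s).smul_measure (ENNReal.inv_ne_top.2 hs)

lemma setIntegral_eq_measureReal_smul_integral_cond {E : Type*} [NormedAddCommGroup E]
    [NormedSpace ℝ E] [IsFiniteMeasure μ] (f : Ω → E) :
    ∫ ω in s, f ω ∂μ = μ.real s • ∫ ω, f ω ∂μ[|s] := by
  by_cases hs : μ s = 0
  · simp [Measure.restrict_eq_zero.2 hs, measureReal_def, hs]
  · rw [ProbabilityTheory.cond, integral_smul_measure, smul_smul, ENNReal.toReal_inv,
      measureReal_def, mul_inv_cancel₀ (ENNReal.toReal_ne_zero.2 ⟨hs, measure_ne_top μ s⟩),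
      one_smul]

end Conditioning

section Quadratic

variable {Ω : Type*} [MeasurableSpace Ω] {ν : Measure Ω} {X : Ω → ℝ}

lemma MeasureTheory.MemLp.integrable_quadratic [IsFiniteMeasure ν] (hX : MemLp X 2 ν)
    (u v a c : ℝ) : Integrable (fun ω => u * (X ω - a) ^ 2 + v * X ω + c) ν :=
  (((hX.sub (memLp_const a)).integrable_sq.const_mul u).fun_add
    ((hX.integrable one_le_two).const_mul v)).fun_add (integrable_const c)

lemma integral_quadratic [IsProbabilityMeasure ν] (hX : MemLp X 2 ν) (u v a c : ℝ) :
    ∫ ω, (u * (X ω - a) ^ 2 + v * X ω + c) ∂ν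
      = u * ∫ ω, (X ω - a) ^ 2 ∂ν + v * ν[X] + c := by
  have hsq : Integrable (fun ω => (X ω - a) ^ 2) ν := (hX.sub (memLp_const a)).integrable_sq
  have hint : Integrable X ν := hX.integrable one_le_two
  rw [integral_add ((hsq.const_mul u).fun_add (hint.const_mul v)) (integrable_const c),
    integral_add (hsq.const_mul u) (hint.const_mul v), integral_const_mul, integral_const_mul,
    integral_const, probReal_univ, one_smul]

lemma integral_sub_sq_eq_variance_add [IsProbabilityMeasure ν] (hX : MemLp X 2 ν) (c : ℝ) :
    ∫ ω, (X ω - c) ^ 2 ∂ν = Var[X; ν] + (ν[X] - c) ^ 2 := by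
  have hXc : MemLp (fun ω => X ω - c) 2 ν := hX.sub (memLp_const c)
  rw [← variance_sub_const hX.aestronglyMeasurable c, variance_eq_sub hXc,
    integral_sub (hX.integrable one_le_two) (integrable_const c), integral_const, probReal_univ,
    one_smul]
  simp only [Pi.pow_apply]
  ring

lemma integral_sub_integral_sq_le [IsProbabilityMeasure ν] (hX : MemLp X 2 ν) (c : ℝ) :
    ∫ ω, (X ω - ν[X]) ^ 2 ∂ν ≤ ∫ ω, (X ω - c) ^ 2 ∂ν := by
  rw [integral_sub_sq_eq_variance_add hX, integral_sub_sq_eq_variance_add hX, sub_self]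
  nlinarith [sq_nonneg (ν[X] - c)]

end Quadratic

lemma isGreatest_quadratic_image_Ici {d : ℝ} (hd : 0 ≤ d) (K c : ℝ) :
    IsGreatest ((fun α : ℝ => d * (K + 2 * α * c - α ^ 2)) '' Set.Ici 0)
      (d * (K + max c 0 ^ 2)) := by
  refine ⟨⟨max c 0, le_max_right c 0, ?_⟩, ?_⟩
  · rcases le_total c 0 with h | h
    · rw [max_eq_right h]; ring
    · rw [max_eq_left h]; ring
  · rintro _ ⟨α, hα, rfl⟩
    have hα : 0 ≤ α := hα
    refine mul_le_mul_of_nonneg_left ?_ hd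
    rcases le_total c 0 with h | h
    · rw [max_eq_right h]; nlinarith
    · rw [max_eq_left h]; nlinarith [sq_nonneg (α - c)]

lemma FM_eq_indicator_add_indicator {Ω : Type*} (A : Set Ω) (p m : ℝ) (S : Ω → ℝ)
    (a b α : ℝ) (ω : Ω) :
    FM A p m S a b α ω =
      A.indicator (fun ω => (1 - p) * (S ω - a) ^ 2 + (-(2 * α * (1 - p))) * S ω
          + p * (1 - p) * (2 * α * m - α ^ 2)) ω
        + Aᶜ.indicator (fun ω => p * (S ω - b) ^ 2 + (2 * α * p) * S ω
          + p * (1 - p) * (2 * α * m - α ^ 2)) ω := by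
  by_cases h : ω ∈ A <;>
    simp only [FM, h, Set.mem_compl_iff, not_true_eq_false, not_false_eq_true,
      Set.indicator_of_mem, Set.indicator_of_notMem, Pi.one_apply] <;> ring

lemma integral_FM {Ω : Type*} [MeasurableSpace Ω] {μ : Measure Ω} [IsProbabilityMeasure μ]
    {A : Set Ω} (hA : MeasurableSet A) (hμA : μ A ≠ 0) (hμAc : μ Aᶜ ≠ 0)
    {p : ℝ} (hp : p = μ.real A) {S : Ω → ℝ} (hS : MemLp S 2 μ) (m a b α : ℝ) :
    ∫ ω, FM A p m S a b α ω ∂μ =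
      p * (1 - p) * (∫ ω, (S ω - a) ^ 2 ∂μ[|A] + ∫ ω, (S ω - b) ^ 2 ∂μ[|Aᶜ]
        + 2 * α * (m + ∫ ω, S ω ∂μ[|Aᶜ] - ∫ ω, S ω ∂μ[|A]) - α ^ 2) := by
  have := cond_isProbabilityMeasure hμA
  have := cond_isProbabilityMeasure hμAc
  simp_rw [FM_eq_indicator_add_indicator]
  rw [integral_add ((hS.integrable_quadratic ..).indicator hA)
      ((hS.integrable_quadratic ..).indicator hA.compl), integral_indicator hA,
    integral_indicator hA.compl, setIntegral_eq_measureReal_smul_integral_cond,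
    setIntegral_eq_measureReal_smul_integral_cond, smul_eq_mul, smul_eq_mul,
    integral_quadratic hS.cond,
    integral_quadratic hS.cond, probReal_compl_eq_one_sub hA, ← hp]
  ring

/-- Theorem 1 (min-max equivalence for the AUC margin loss): the infimum over `(a,b) ∈ ℝ²`
of `sup_{α ≥ 0} E_μ[F_M(a,b,α)]` equals `p(1−p)·A_M`, and this infimum is attained. -/
theorem minmax_AUC_margin
    {Ω : Type*} [MeasurableSpace Ω] (μ : Measure Ω) [IsProbabilityMeasure μ]
    (A : Set Ω) (hA : MeasurableSet A)
    (p : ℝ) (hp : p = (μ A).toReal) (hp0 : 0 < p) (hp1 : p < 1)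
    (S : Ω → ℝ) (hS : MemLp S 2 μ) (m : ℝ)
    (aS bS AM : ℝ)
    (haS : aS = ∫ ω, S ω ∂μ[|A]) (hbS : bS = ∫ ω, S ω ∂μ[|Aᶜ])
    (hAM : AM = (∫ ω, (S ω - aS) ^ 2 ∂μ[|A]) + (∫ ω, (S ω - bS) ^ 2 ∂μ[|Aᶜ])
        + max (m + bS - aS) 0 ^ 2) :
    IsLeast (Set.range (fun ab : ℝ × ℝ =>
        sSup ((fun α : ℝ => ∫ ω, FM A p m S ab.1 ab.2 α ω ∂μ) '' Set.Ici 0)))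
      (p * (1 - p) * AM) := by
  have hp' : p = μ.real A := hp
  have hμA : μ A ≠ 0 := (measureReal_ne_zero_iff (measure_ne_top μ A)).1 (hp' ▸ hp0.ne')
  have hμAc : μ Aᶜ ≠ 0 := (measureReal_ne_zero_iff (measure_ne_top μ Aᶜ)).1 <| by
    rw [probReal_compl_eq_one_sub hA, ← hp']; linarith
  have := cond_isProbabilityMeasure hμA
  have := cond_isProbabilityMeasure hμAc
  have hd : 0 ≤ p * (1 - p) := (mul_pos hp0 (sub_pos.2 hp1)).le
  have hsup (a b : ℝ) :
      sSup ((fun α : ℝ => ∫ ω, FM A p m S a b α ω ∂μ) '' Set.Ici 0) =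
        p * (1 - p) * (∫ ω, (S ω - a) ^ 2 ∂μ[|A] + ∫ ω, (S ω - b) ^ 2 ∂μ[|Aᶜ]
          + max (m + bS - aS) 0 ^ 2) := by
    simp_rw [integral_FM hA hμA hμAc hp' hS, ← haS, ← hbS]
    exact (isGreatest_quadratic_image_Ici hd _ _).csSup_eq
  refine ⟨⟨(aS, bS), by dsimp only; rw [hsup, hAM]⟩, ?_⟩
  rintro _ ⟨⟨a, b⟩, rfl⟩
  dsimp only
  rw [hsup, hAM, haS, hbS]
  gcongr ?_ * (?_ + ?_ + _)
  · exact integral_sub_integral_sq_le hS.cond a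
  · exact integral_sub_integral_sq_le hS.cond b
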